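/- arXiv:1203.6630 — 3 statements merged into one kernel-verified Lean document; each statement's English description precedes it below -/
import Mathlib

section
/- In the two-channel power allocation model with λ₀ ≤ p₁ ≤ λ₁, R_l < R_h < 2R_l, λ₀ ≥ 0, β ∈ [0,1), suppose V : [0,1]² → ℝ satisfies the Bellman equation V = max{V_b,V₁,V₂} and each V_a (a ∈ {b,1,2}) is affine in each coordinate. Then V_b(p₁,λ₀) ≥ V₂(p₁,λ₀); in particular, the action B₂ (betting all power on channel 2) is never uniquely optimal at any belief of the form (p₁, λ₀). -/
/-!
`V` is a maximum of three functions affine in the first belief, hence convex in it. Since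
`T p₁ = (1 - p₁) λ₀ + p₁ λ₁`, the continuation value of `B₂` at `(p₁, λ₀)` is at most the
corresponding mixture of `V(λ₀, ·)` and `V(λ₁, ·)`, which is exactly the continuation value of the
balanced action. The immediate rewards compare as `(p₁ + λ₀) R_l ≥ λ₀ R_h`, because
`p₁ ≥ λ₀ ≥ 0` and `R_h < 2 R_l`.
-/

open Set

/-- A function of two real variables is affine in each coordinate separately. -/
def AffineInEach (F : ℝ → ℝ → ℝ) : Prop :=
  (∀ y, ∃ a c, ∀ x, F x y = a + c * x) ∧ (∀ x, ∃ a c, ∀ y, F x y = a + c * y)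

theorem AffineInEach.convexOn_fst {F : ℝ → ℝ → ℝ} (hF : AffineInEach F) (y : ℝ) :
    ConvexOn ℝ univ (F · y) := by
  obtain ⟨a, c, hac⟩ := hF.1 y
  have hF : (F · y) = fun x => a + LinearMap.mul ℝ ℝ c x := funext fun x => by simp [hac]
  exact hF ▸ (convexOn_const a convex_univ).add ((LinearMap.mul ℝ ℝ c).convexOn convex_univ)

theorem convexOn_max_of_affineInEach {F G H : ℝ → ℝ → ℝ} (hF : AffineInEach F)
    (hG : AffineInEach G) (hH : AffineInEach H) (y : ℝ) :
    ConvexOn ℝ univ fun x => max (max (F x y) (G x y)) (H x y) :=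
  ((hF.convexOn_fst y).sup (hG.convexOn_fst y)).sup (hH.convexOn_fst y)

theorem balanced_dominates_B2_on_lower_border_general (l0 l1 β Rl Rh : ℝ)
    (hl0 : l0 ∈ Set.Icc (0:ℝ) 1) (hl1 : l1 ∈ Set.Icc (0:ℝ) 1)
    (hRl : 0 < Rl) (hRh : Rh < 2 * Rl)
    (hβ0 : 0 ≤ β)
(T : ℝ → ℝ) (hT : ∀ p, T p = l0 + (l1 - l0) * p)
    (Vb V1 V2 V : ℝ → ℝ → ℝ)
    (hVb : ∀ p1 p2, Vb p1 p2 = p1 * Rl + p2 * Rl +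
      β * ((1 - p1) * (1 - p2) * V l0 l0 + p1 * (1 - p2) * V l1 l0 +
        (1 - p1) * p2 * V l0 l1 + p1 * p2 * V l1 l1))
    (hV2 : ∀ p1 p2, V2 p1 p2 = p2 * Rh +
      β * ((1 - p2) * V (T p1) l0 + p2 * V (T p1) l1))
    (hV : ∀ p1 p2, V p1 p2 = max (max (Vb p1 p2) (V1 p1 p2)) (V2 p1 p2))
    (hab : AffineInEach Vb) (ha1 : AffineInEach V1) (ha2 : AffineInEach V2)
    (p1 : ℝ) (hp1 : p1 ∈ Set.Icc l0 l1) :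
    Vb p1 l0 ≥ V2 p1 l0 := by
  obtain ⟨hl00, hl01⟩ := hl0
  have hp10 : 0 ≤ p1 := hl00.trans hp1.1
  have hp11 : p1 ≤ 1 := hp1.2.trans hl1.2
  have mixture : ∀ y, V (T p1) y ≤ (1 - p1) * V l0 y + p1 * V l1 y := by
    intro y
    have hconv : ConvexOn ℝ univ (V · y) := by
      simpa only [hV] using convexOn_max_of_affineInEach hab ha1 ha2 y
    have hTp1 : T p1 = (1 - p1) • l0 + p1 • l1 := by rw [hT, smul_eq_mul, smul_eq_mul]; ring
    rw [hTp1]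
    exact hconv.2 (mem_univ l0) (mem_univ l1) (by linarith) hp10 (by ring)
  have continuation : β * ((1 - l0) * V (T p1) l0 + l0 * V (T p1) l1) ≤
      β * ((1 - l0) * ((1 - p1) * V l0 l0 + p1 * V l1 l0) +
        l0 * ((1 - p1) * V l0 l1 + p1 * V l1 l1)) := by
    have hl0' : 0 ≤ 1 - l0 := by linarith
    gcongr <;> exact mixture _
  have reward : l0 * Rh ≤ p1 * Rl + l0 * Rl := by
    nlinarith [mul_le_mul_of_nonneg_left hRh.le hl00, mul_le_mul_of_nonneg_right hp1.1 hRl.le]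
  rw [hVb, hV2]
  linarith

/-- Lemma 6: On the border `p₂ = λ₀`, the balanced action dominates
betting on channel 2: `V_b(p₁,λ₀) ≥ V₂(p₁,λ₀)`. -/
theorem balanced_dominates_B2_on_lower_border (l0 l1 β Rl Rh : ℝ)
    (hl0 : l0 ∈ Set.Icc (0:ℝ) 1) (hl1 : l1 ∈ Set.Icc (0:ℝ) 1) (hll : l0 ≤ l1)
    (hRl : 0 < Rl) (hRlh : Rl < Rh) (hRh : Rh < 2 * Rl)
    (hβ0 : 0 ≤ β) (hβ1 : β < 1)
(T : ℝ → ℝ) (hT : ∀ p, T p = l0 + (l1 - l0) * p)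
    (Vb V1 V2 V : ℝ → ℝ → ℝ)
    (hVb : ∀ p1 p2, Vb p1 p2 = p1 * Rl + p2 * Rl +
      β * ((1 - p1) * (1 - p2) * V l0 l0 + p1 * (1 - p2) * V l1 l0 +
        (1 - p1) * p2 * V l0 l1 + p1 * p2 * V l1 l1))
    (hV1 : ∀ p1 p2, V1 p1 p2 = p1 * Rh +
      β * ((1 - p1) * V l0 (T p2) + p1 * V l1 (T p2)))
    (hV2 : ∀ p1 p2, V2 p1 p2 = p2 * Rh +
      β * ((1 - p2) * V (T p1) l0 + p2 * V (T p1) l1))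
    (hV : ∀ p1 p2, V p1 p2 = max (max (Vb p1 p2) (V1 p1 p2)) (V2 p1 p2))
    (hab : AffineInEach Vb) (ha1 : AffineInEach V1) (ha2 : AffineInEach V2)
    (p1 : ℝ) (hp1 : p1 ∈ Set.Icc l0 l1) :
    Vb p1 l0 ≥ V2 p1 l0 :=
  balanced_dominates_B2_on_lower_border_general l0 l1 β Rl Rh hl0 hl1 hRl hRh hβ0 T hT Vb V1 V2 V
    hVb hV2 hV hab ha1 ha2 p1 hp1
end

section
/- Under the hypotheses of the two-channel model (λ₀ ≤ p₁ ≤ λ₁, 0 < R_l < R_h < 2R_l, β ∈ [0,1), V satisfying the Bellman equation with coordinatewise-affine action values), V_b(p₁,λ₁) ≥ V₁(p₁,λ₁): the action B₁ (betting all power on channel 1) is never uniquely optimal at beliefs of the form (p₁, λ₁). -/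
open Set

theorem convexOn_univ_affine (a c : ℝ) : ConvexOn ℝ univ fun y : ℝ => a + c * y :=
  ⟨convex_univ, fun x _ y _ s t _ _ hst => le_of_eq <| by
    simp only [smul_eq_mul]
    linear_combination (-a) * hst⟩

theorem AffineInEach.convexOn_right {F : ℝ → ℝ → ℝ} (hF : AffineInEach F) (x : ℝ) :
    ConvexOn ℝ univ (F x) := by
  obtain ⟨a, c, h⟩ := hF.2 x
  simpa only [← funext h] using convexOn_univ_affine a c

theorem convexOn_right_of_eq_max_of_affineInEach {F G H V : ℝ → ℝ → ℝ}
    (hF : AffineInEach F) (hG : AffineInEach G) (hH : AffineInEach H)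
    (hV : ∀ x y, V x y = max (max (F x y) (G x y)) (H x y)) (x : ℝ) : ConvexOn ℝ univ (V x) := by
  have : V x = F x ⊔ G x ⊔ H x := funext (hV x)
  rw [this]
  exact ((hF.convexOn_right x).sup (hG.convexOn_right x)).sup (hH.convexOn_right x)

theorem balanced_dominates_B1_on_upper_border_general (l0 l1 β Rl Rh : ℝ)
    (hl0 : l0 ∈ Set.Icc (0:ℝ) 1) (hl1 : l1 ∈ Set.Icc (0:ℝ) 1)
    (hRl : 0 < Rl) (hRh : Rh < 2 * Rl)
    (hβ0 : 0 ≤ β)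
(T : ℝ → ℝ) (hT : ∀ p, T p = l0 + (l1 - l0) * p)
    (Vb V1 V2 V : ℝ → ℝ → ℝ)
    (hVb : ∀ p1 p2, Vb p1 p2 = p1 * Rl + p2 * Rl +
      β * ((1 - p1) * (1 - p2) * V l0 l0 + p1 * (1 - p2) * V l1 l0 +
        (1 - p1) * p2 * V l0 l1 + p1 * p2 * V l1 l1))
    (hV1 : ∀ p1 p2, V1 p1 p2 = p1 * Rh +
      β * ((1 - p1) * V l0 (T p2) + p1 * V l1 (T p2)))
    (hV : ∀ p1 p2, V p1 p2 = max (max (Vb p1 p2) (V1 p1 p2)) (V2 p1 p2))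
    (hab : AffineInEach Vb) (ha1 : AffineInEach V1) (ha2 : AffineInEach V2)
    (p1 : ℝ) (hp1 : p1 ∈ Set.Icc l0 l1) :
    Vb p1 l1 ≥ V1 p1 l1 := by
  obtain ⟨hp0, hp1l⟩ : 0 ≤ p1 ∧ p1 ≤ 1 := ⟨hl0.1.trans hp1.1, hp1.2.trans hl1.2⟩
  have jensen (x : ℝ) : V x (T l1) ≤ (1 - l1) * V x l0 + l1 * V x l1 := by
    have hTl1 : T l1 = (1 - l1) • l0 + l1 • l1 := by rw [hT]; simp only [smul_eq_mul]; ring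
    rw [hTl1]
    exact (convexOn_right_of_eq_max_of_affineInEach hab ha1 ha2 hV x).2 trivial trivial
      (sub_nonneg.2 hl1.2) hl1.1 (sub_add_cancel 1 l1)
  have reward : p1 * Rh ≤ p1 * Rl + l1 * Rl := by nlinarith [hp1.2]
  have continuation : (1 - p1) * V l0 (T l1) + p1 * V l1 (T l1) ≤
      (1 - p1) * ((1 - l1) * V l0 l0 + l1 * V l0 l1) +
        p1 * ((1 - l1) * V l1 l0 + l1 * V l1 l1) :=
    add_le_add (mul_le_mul_of_nonneg_left (jensen l0) (sub_nonneg.2 hp1l))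
      (mul_le_mul_of_nonneg_left (jensen l1) hp0)
  rw [hVb, hV1]
  linear_combination reward + β * continuation

/-- On the border `p₂ = λ₁`, the balanced action dominates betting
on channel 1: `V_b(p₁,λ₁) ≥ V₁(p₁,λ₁)`. -/
theorem balanced_dominates_B1_on_upper_border (l0 l1 β Rl Rh : ℝ)
    (hl0 : l0 ∈ Set.Icc (0:ℝ) 1) (hl1 : l1 ∈ Set.Icc (0:ℝ) 1) (hll : l0 ≤ l1)
    (hRl : 0 < Rl) (hRlh : Rl < Rh) (hRh : Rh < 2 * Rl)
    (hβ0 : 0 ≤ β) (hβ1 : β < 1)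
(T : ℝ → ℝ) (hT : ∀ p, T p = l0 + (l1 - l0) * p)
    (Vb V1 V2 V : ℝ → ℝ → ℝ)
    (hVb : ∀ p1 p2, Vb p1 p2 = p1 * Rl + p2 * Rl +
      β * ((1 - p1) * (1 - p2) * V l0 l0 + p1 * (1 - p2) * V l1 l0 +
        (1 - p1) * p2 * V l0 l1 + p1 * p2 * V l1 l1))
    (hV1 : ∀ p1 p2, V1 p1 p2 = p1 * Rh +
      β * ((1 - p1) * V l0 (T p2) + p1 * V l1 (T p2)))
    (hV2 : ∀ p1 p2, V2 p1 p2 = p2 * Rh +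
      β * ((1 - p2) * V (T p1) l0 + p2 * V (T p1) l1))
    (hV : ∀ p1 p2, V p1 p2 = max (max (Vb p1 p2) (V1 p1 p2)) (V2 p1 p2))
    (hab : AffineInEach Vb) (ha1 : AffineInEach V1) (ha2 : AffineInEach V2)
    (p1 : ℝ) (hp1 : p1 ∈ Set.Icc l0 l1) :
    Vb p1 l1 ≥ V1 p1 l1 :=
  balanced_dominates_B1_on_upper_border_general l0 l1 β Rl Rh hl0 hl1 hRl hRh hβ0 T hT Vb V1 V2 V
    hVb hV1 hV hab ha1 ha2 p1 hp1
end

section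
/- In the two-channel model, for any symmetric V satisfying the Bellman equation, V(λ₀,λ₀) = V_b(λ₀,λ₀) and V(λ₁,λ₁) = V_b(λ₁,λ₁): the balanced action is optimal at the two diagonal corner beliefs (λ₀,λ₀) and (λ₁,λ₁). -/
/-! At a diagonal belief `(l, l)` playing one channel earns `l * Rh ≤ 2 * l * Rl` now
and moves the other channel's belief to `T l = (1 - l) * l0 + l * l1`. Since `V` is a maximum of
functions affine in each coordinate, it is convex in each coordinate, so the continuation value
`V x (T l)` is at most `(1 - l) * V x l0 + l * V x l1`: exactly what the balanced action
collects by observing both channels. Hence `V1 l l` and `V2 l l` are at most `Vb l l`. -/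

open Set

lemma convexOn_univ_of_affine {f : ℝ → ℝ} (hf : ∃ a c, ∀ y, f y = a + c * y) :
    ConvexOn ℝ univ f := by
  obtain ⟨a, c, hac⟩ := hf
  refine ⟨convex_univ, fun x _ y _ s t _ _ hst => le_of_eq ?_⟩
  simp only [hac, smul_eq_mul]
  linear_combination -a * hst

lemma convexOn_univ_max_of_affine {f g₁ g₂ g₃ : ℝ → ℝ}
    (hf : ∀ y, f y = max (max (g₁ y) (g₂ y)) (g₃ y))
    (h₁ : ∃ a c, ∀ y, g₁ y = a + c * y) (h₂ : ∃ a c, ∀ y, g₂ y = a + c * y)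
    (h₃ : ∃ a c, ∀ y, g₃ y = a + c * y) :
    ConvexOn ℝ univ f := by
  have hsup : f = (g₁ ⊔ g₂) ⊔ g₃ := funext hf
  rw [hsup]
  exact ((convexOn_univ_of_affine h₁).sup (convexOn_univ_of_affine h₂)).sup
    (convexOn_univ_of_affine h₃)

lemma ConvexOn.le_convexCombination {f : ℝ → ℝ} (hf : ConvexOn ℝ univ f) {a b p : ℝ}
    (hp : p ∈ Icc (0 : ℝ) 1) :
    f ((1 - p) * a + p * b) ≤ (1 - p) * f a + p * f b := by
  simpa only [smul_eq_mul] using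
    hf.2 (mem_univ a) (mem_univ b) (sub_nonneg.2 hp.2) hp.1 (sub_add_cancel 1 p)

lemma single_channel_le_balanced {W : ℝ → ℝ → ℝ} {l0 l1 β Rl Rh l : ℝ} (hβ : 0 ≤ β) (hR : Rh ≤ 2 * Rl)
    (hl : l ∈ Icc (0 : ℝ) 1) (hW0 : ConvexOn ℝ univ (W l0)) (hW1 : ConvexOn ℝ univ (W l1)) :
    l * Rh + β * ((1 - l) * W l0 ((1 - l) * l0 + l * l1) + l * W l1 ((1 - l) * l0 + l * l1)) ≤
      l * Rl + l * Rl + β * ((1 - l) * (1 - l) * W l0 l0 + l * (1 - l) * W l1 l0 +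
        (1 - l) * l * W l0 l1 + l * l * W l1 l1) := by
  have hl_nonneg : 0 ≤ l := hl.1
  have hl_compl_nonneg : 0 ≤ 1 - l := sub_nonneg.2 hl.2
  have hreward : l * Rh ≤ l * (2 * Rl) := mul_le_mul_of_nonneg_left hR hl_nonneg
  calc _ ≤ l * Rh + β * ((1 - l) * ((1 - l) * W l0 l0 + l * W l0 l1) +
          l * ((1 - l) * W l1 l0 + l * W l1 l1)) := by
        gcongr
        exacts [hW0.le_convexCombination hl, hW1.le_convexCombination hl]
    _ ≤ _ := by linear_combination hreward

theorem balanced_optimal_at_corners_general (l0 l1 β Rl Rh : ℝ)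
    (hl0 : l0 ∈ Set.Icc (0:ℝ) 1) (hl1 : l1 ∈ Set.Icc (0:ℝ) 1)
    (hRh : Rh < 2 * Rl)
    (hβ0 : 0 ≤ β)
(T : ℝ → ℝ) (hT : ∀ p, T p = l0 + (l1 - l0) * p)
    (Vb V1 V2 V : ℝ → ℝ → ℝ)
    (hVb : ∀ p1 p2, Vb p1 p2 = p1 * Rl + p2 * Rl +
      β * ((1 - p1) * (1 - p2) * V l0 l0 + p1 * (1 - p2) * V l1 l0 +
        (1 - p1) * p2 * V l0 l1 + p1 * p2 * V l1 l1))
    (hV1 : ∀ p1 p2, V1 p1 p2 = p1 * Rh +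
      β * ((1 - p1) * V l0 (T p2) + p1 * V l1 (T p2)))
    (hV2 : ∀ p1 p2, V2 p1 p2 = p2 * Rh +
      β * ((1 - p2) * V (T p1) l0 + p2 * V (T p1) l1))
    (hV : ∀ p1 p2, V p1 p2 = max (max (Vb p1 p2) (V1 p1 p2)) (V2 p1 p2))
    (hab : AffineInEach Vb) (ha1 : AffineInEach V1) (ha2 : AffineInEach V2) :
    V l0 l0 = Vb l0 l0 ∧ V l1 l1 = Vb l1 l1 := by
  have hT' : ∀ p, T p = (1 - p) * l0 + p * l1 := fun p => by rw [hT]; ring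
  have convex_snd : ∀ x, ConvexOn ℝ univ (V x) := fun x =>
    convexOn_univ_max_of_affine (hV x) (hab.2 x) (ha1.2 x) (ha2.2 x)
  have convex_fst : ∀ y, ConvexOn ℝ univ (V · y) := fun y =>
    convexOn_univ_max_of_affine (hV · y) (hab.1 y) (ha1.1 y) (ha2.1 y)
  have corner : ∀ l ∈ Icc (0 : ℝ) 1, V l l = Vb l l := by
    intro l hl
    have h1 : V1 l l ≤ Vb l l := by
      rw [hV1, hVb, hT']
      exact single_channel_le_balanced hβ0 hRh.le hl (convex_snd l0) (convex_snd l1)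
    have h2 : V2 l l ≤ Vb l l := by
      rw [hV2, hVb, hT']
      linear_combination single_channel_le_balanced (W := fun x y => V y x) hβ0 hRh.le hl
        (convex_fst l0) (convex_fst l1)
    rw [hV, max_eq_left h1, max_eq_left h2]
  exact ⟨corner l0 hl0, corner l1 hl1⟩

/-- For any symmetric `V` satisfying the Bellman equation, the
balanced action is optimal at the diagonal corners `(λ₀,λ₀)` and `(λ₁,λ₁)`. -/
theorem balanced_optimal_at_corners (l0 l1 β Rl Rh : ℝ)
    (hl0 : l0 ∈ Set.Icc (0:ℝ) 1) (hl1 : l1 ∈ Set.Icc (0:ℝ) 1) (hll : l0 ≤ l1)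
    (hRl : 0 < Rl) (hRlh : Rl < Rh) (hRh : Rh < 2 * Rl)
    (hβ0 : 0 ≤ β) (hβ1 : β < 1)
(T : ℝ → ℝ) (hT : ∀ p, T p = l0 + (l1 - l0) * p)
    (Vb V1 V2 V : ℝ → ℝ → ℝ)
    (hVb : ∀ p1 p2, Vb p1 p2 = p1 * Rl + p2 * Rl +
      β * ((1 - p1) * (1 - p2) * V l0 l0 + p1 * (1 - p2) * V l1 l0 +
        (1 - p1) * p2 * V l0 l1 + p1 * p2 * V l1 l1))
    (hV1 : ∀ p1 p2, V1 p1 p2 = p1 * Rh +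
      β * ((1 - p1) * V l0 (T p2) + p1 * V l1 (T p2)))
    (hV2 : ∀ p1 p2, V2 p1 p2 = p2 * Rh +
      β * ((1 - p2) * V (T p1) l0 + p2 * V (T p1) l1))
    (hV : ∀ p1 p2, V p1 p2 = max (max (Vb p1 p2) (V1 p1 p2)) (V2 p1 p2))
    (hsym : ∀ x y, V x y = V y x)
    (hab : AffineInEach Vb) (ha1 : AffineInEach V1) (ha2 : AffineInEach V2) :
    V l0 l0 = Vb l0 l0 ∧ V l1 l1 = Vb l1 l1 :=
  balanced_optimal_at_corners_general l0 l1 β Rl Rh hl0 hl1 hRh hβ0 T hT Vb V1 V2 V hVb hV1 hV2 hV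
    hab ha1 ha2
end
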